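/- (Weighted Newton inequality) For every integer k ≥ 1, every μ₀ ∈ ℝ and every μ ∈ ℝⁿ, one has σ_{k−1}^∞(μ₀;μ)·σ_{k+1}^∞(μ₀;μ) ≤ (k/(k+1))·(σ_k^∞(μ₀;μ))². -/

import Mathlib

/-- The `m`-th elementary symmetric polynomial in the `n` variables `μ 0, …, μ (n-1)`
(with `σ₀ = 1` and `σ_m = 0` for `m > n`). -/
noncomputable def esymm {n : ℕ} (μ : Fin n → ℝ) (m : ℕ) : ℝ :=
  ∑ s ∈ Finset.powersetCard m (Finset.univ : Finset (Fin n)), ∏ i ∈ s, μ i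

/-- The `k`-th weighted elementary symmetric polynomial
`σ_k^∞(μ₀;μ) = ∑_{j=0}^k (μ₀^j/j!) σ_{k-j}(μ)`. -/
noncomputable def sigmaInf {n : ℕ} (μ₀ : ℝ) (μ : Fin n → ℝ) (k : ℕ) : ℝ :=
  ∑ j ∈ Finset.range (k + 1), μ₀ ^ j / (Nat.factorial j : ℝ) * esymm μ (k - j)

/-!
Real-rootedness of a polynomial survives differentiation (Rolle) and reversal of its
coefficients. Differentiating, reversing and differentiating again turns any three consecutive
coefficients of a real-rooted polynomial into those of a real-rooted quadratic, and the
nonnegativity of its discriminant is Newton's inequality. The polynomials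
`(1 + μ₀ X / N) ^ N * ∏ i, (1 + μ i X)` are real-rooted, and since `(1 + μ₀ X / N) ^ N → exp (μ₀ X)`
coefficientwise, their coefficients tend to `σ_k^∞(μ₀;μ)`; the inequality passes to the limit.
-/

open Polynomial Filter Topology Asymptotics
open scoped Nat

namespace Polynomial

theorem reverse_one {R : Type*} [Semiring R] : (1 : R[X]).reverse = 1 := by
  simpa using reverse_C (1 : R)

theorem Splits.reverse {K : Type*} [Field K] {p : K[X]} (hp : p.Splits) : p.reverse.Splits := by
  induction hp using Submonoid.closure_induction with
  | mem f hf =>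
    obtain ⟨a, rfl⟩ | ⟨a, rfl⟩ := hf
    · rw [reverse_C]; exact Splits.C a
    · have : (X + C a).reverse = 1 + C a * X := by
        simpa [reverse_one] using reverse_mul_X (1 : K[X])
      rw [this]
      exact Splits.of_natDegree_le_one (by compute_degree)
  | one => rw [reverse_one]; exact Splits.one
  | mul f g _ _ hf hg => rw [reverse_mul_of_domain]; exact hf.mul hg

theorem Splits.derivative {p : ℝ[X]} (hp : p.Splits) : (Polynomial.derivative p).Splits := by
  rw [splits_iff_card_roots] at hp ⊢
  have := card_roots_le_derivative p
  have := (Polynomial.derivative p).card_roots'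
  rw [natDegree_derivative] at *
  omega

theorem Splits.iterate_derivative {p : ℝ[X]} (hp : p.Splits) (n : ℕ) :
    (Polynomial.derivative^[n] p).Splits := by
  induction n with
  | zero => exact hp
  | succ n ih => rw [Function.iterate_succ_apply']; exact ih.derivative

section ScaledCoeff

variable {R : Type*} [CommSemiring R]

/-- `d! · p.coeff i / (d choose i)` for `d = p.natDegree`: in this normalisation Newton's
inequalities read `b (i - 1) * b (i + 1) ≤ b i ^ 2`, differentiation shifts the sequence and
reversal reflects it. -/
def scaledCoeff (p : R[X]) (i : ℕ) : R :=
  (i ! : R) * ((p.natDegree - i)! : R) * p.coeff i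

theorem natDegree_iterate_derivative_eq [IsAddTorsionFree R] (p : R[X]) (n : ℕ) :
    (derivative^[n] p).natDegree = p.natDegree - n := by
  induction n with
  | zero => rfl
  | succ n ih => rw [Function.iterate_succ_apply', natDegree_derivative, ih, Nat.sub_sub]

theorem scaledCoeff_derivative [IsAddTorsionFree R] (p : R[X]) (i : ℕ) :
    scaledCoeff (derivative p) i = scaledCoeff p (i + 1) := by
  rw [scaledCoeff, scaledCoeff, coeff_derivative, natDegree_derivative, Nat.sub_sub,
    add_comm 1 i, Nat.factorial_succ]
  push_cast
  ring

theorem scaledCoeff_iterate_derivative [IsAddTorsionFree R] (p : R[X]) (n i : ℕ) :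
    scaledCoeff (derivative^[n] p) i = scaledCoeff p (i + n) := by
  induction n generalizing i with
  | zero => rfl
  | succ n ih =>
    rw [Function.iterate_succ_apply', scaledCoeff_derivative, ih, add_right_comm, add_assoc]

theorem scaledCoeff_reverse {p : R[X]} (hp : p.coeff 0 ≠ 0) {i : ℕ} (hi : i ≤ p.natDegree) :
    scaledCoeff p.reverse i = scaledCoeff p (p.natDegree - i) := by
  have hdeg : p.reverse.natDegree = p.natDegree := by
    rw [reverse_natDegree, natTrailingDegree_eq_zero.mpr (Or.inr hp), Nat.sub_zero]
  rw [scaledCoeff, scaledCoeff, hdeg, coeff_reverse, revAt_le hi, Nat.sub_sub_self hi]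
  ring

end ScaledCoeff

theorem Splits.scaledCoeff_mul_le_sq_of_natDegree_eq_two {K : Type*} [Field K] [LinearOrder K]
    [IsStrictOrderedRing K] {q : K[X]} (hq : q.Splits) (h2 : q.natDegree = 2) :
    scaledCoeff q 0 * scaledCoeff q 2 ≤ scaledCoeff q 1 ^ 2 := by
  obtain ⟨x, hx⟩ := hq.exists_eval_eq_zero (natDegree_pos_iff_degree_pos.mp (by omega)).ne'
  have hroot : q.coeff 2 * (x * x) + q.coeff 1 * x + q.coeff 0 = 0 := by
    rw [eval_eq_sum_range, h2] at hx
    simp only [Finset.sum_range_succ, Finset.sum_range_zero] at hx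
    linear_combination hx
  have hdisc := discrim_eq_sq_of_quadratic_eq_zero hroot
  rw [discrim] at hdisc
  calc scaledCoeff q 0 * scaledCoeff q 2 = 4 * q.coeff 2 * q.coeff 0 := by
        simp [scaledCoeff, h2, Nat.factorial]; ring
    _ ≤ q.coeff 1 ^ 2 := by linarith [sq_nonneg (2 * q.coeff 2 * x + q.coeff 1)]
    _ = scaledCoeff q 1 ^ 2 := by simp [scaledCoeff, h2]

theorem Splits.scaledCoeff_mul_le_sq {p : ℝ[X]} (hp : p.Splits) {k : ℕ}
    (hk : k + 2 ≤ p.natDegree) :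
    scaledCoeff p k * scaledCoeff p (k + 2) ≤ scaledCoeff p (k + 1) ^ 2 := by
  -- `scaledCoeff p k` is a multiple of the constant term of `s`, and reversing `s` keeps its
  -- degree only if that term is nonzero
  by_cases h0 : scaledCoeff p k = 0
  · rw [h0, zero_mul]; positivity
  set s := Polynomial.derivative^[k] p
  have hs0 : s.coeff 0 ≠ 0 := by
    contrapose! h0
    rw [← zero_add k, ← scaledCoeff_iterate_derivative, scaledCoeff, h0, mul_zero]
  have hsdeg : s.natDegree = p.natDegree - k := natDegree_iterate_derivative_eq p k
  set v := Polynomial.derivative^[p.natDegree - k - 2] s.reverse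
  have hv : ∀ j ≤ 2, scaledCoeff v j = scaledCoeff p (2 - j + k) := by
    intro j hj
    rw [scaledCoeff_iterate_derivative, scaledCoeff_reverse hs0 (by omega),
      scaledCoeff_iterate_derivative, hsdeg]
    congr 1
    omega
  have hvdeg : v.natDegree = 2 := by
    rw [natDegree_iterate_derivative_eq, reverse_natDegree,
      natTrailingDegree_eq_zero.mpr (Or.inr hs0), hsdeg]
    omega
  have hquad := (hp.iterate_derivative k).reverse.iterate_derivative (p.natDegree - k - 2)
    |>.scaledCoeff_mul_le_sq_of_natDegree_eq_two hvdeg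
  rw [hv 0 (by omega), hv 1 (by omega), hv 2 (by omega)] at hquad
  simpa only [Nat.reduceSub, zero_add, add_zero, add_comm, mul_comm] using hquad

theorem Splits.coeff_mul_le_sq {p : ℝ[X]} (hp : p.Splits) (k : ℕ) :
    (k + 2 : ℝ) * (p.coeff k * p.coeff (k + 2)) ≤ (k + 1) * p.coeff (k + 1) ^ 2 := by
  rcases lt_or_ge p.natDegree (k + 2) with hlt | hle
  · rw [coeff_eq_zero_of_natDegree_lt hlt, mul_zero, mul_zero]; positivity
  obtain ⟨l, hl⟩ := Nat.exists_eq_add_of_le hle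
  have hnewton := hp.scaledCoeff_mul_le_sq hle
  simp only [scaledCoeff, hl, show k + 2 + l - k = l + 2 by omega,
    show k + 2 + l - (k + 1) = l + 1 by omega, show k + 2 + l - (k + 2) = l by omega,
    Nat.factorial_succ] at hnewton
  push_cast at hnewton
  have hfac : (0 : ℝ) < (k ! * l ! : ℝ) ^ 2 * ((k + 1) * (l + 1)) := by positivity
  have hexact : (k + 2 : ℝ) * (l + 2) * (p.coeff k * p.coeff (k + 2))
      ≤ (k + 1) * (l + 1) * p.coeff (k + 1) ^ 2 :=
    le_of_mul_le_mul_left (by linear_combination hnewton) hfac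
  nlinarith [sq_nonneg (p.coeff (k + 1))]

end Polynomial

theorem Finset.prod_one_add_C_mul_X_coeff {R ι : Type*} [CommSemiring R] (s : Finset ι)
    (f : ι → R) (j : ℕ) :
    (∏ i ∈ s, (1 + C (f i) * X)).coeff j = ∑ t ∈ s.powersetCard j, ∏ i ∈ t, f i := by
  classical
  rw [Finset.prod_one_add, finsetSum_coeff, Finset.powersetCard_eq_filter, Finset.sum_filter]
  refine Finset.sum_congr rfl fun t _ => ?_
  rw [Finset.prod_mul_distrib, Finset.prod_const, ← map_prod, coeff_C_mul_X_pow]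
  simp only [eq_comm]

theorem Polynomial.coeff_one_add_C_mul_X_pow {R : Type*} [CommSemiring R] (c : R) (N i : ℕ) :
    ((1 + C c * X) ^ N).coeff i = N.choose i * c ^ i := by
  have : (1 + C c * X) ^ N = ((1 + X) ^ N).comp (C c * X) := by simp [pow_comp]
  rw [this, comp_C_mul_X_coeff, coeff_one_add_X_pow]

theorem tendsto_choose_mul_div_pow (x : ℝ) (i : ℕ) :
    Tendsto (fun N : ℕ => N.choose i * (x / N) ^ i) atTop (𝓝 (x ^ i / i !)) := by
  have hequiv := (isEquivalent_choose i).mul (IsEquivalent.refl (u := fun N : ℕ => (x / N) ^ i))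
  refine hequiv.symm.tendsto_nhds (tendsto_const_nhds.congr' ?_)
  filter_upwards [eventually_ne_atTop 0] with N hN
  simp only [Pi.mul_apply]
  rw [div_pow]
  field_simp

noncomputable def sigmaInfApproxPoly {n : ℕ} (μ₀ : ℝ) (μ : Fin n → ℝ) (N : ℕ) : ℝ[X] :=
  (1 + C (μ₀ / N) * X) ^ N * ∏ i, (1 + C (μ i) * X)

theorem splits_sigmaInfApproxPoly {n : ℕ} (μ₀ : ℝ) (μ : Fin n → ℝ) (N : ℕ) :
    (sigmaInfApproxPoly μ₀ μ N).Splits := by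
  have hlin : ∀ a : ℝ, (1 + C a * X).Splits := fun a =>
    Splits.of_natDegree_le_one (by compute_degree)
  exact ((hlin _).pow N).mul (Splits.prod fun i _ => hlin (μ i))

theorem coeff_sigmaInfApproxPoly {n : ℕ} (μ₀ : ℝ) (μ : Fin n → ℝ) (N j : ℕ) :
    (sigmaInfApproxPoly μ₀ μ N).coeff j
      = ∑ i ∈ Finset.range (j + 1), N.choose i * (μ₀ / N) ^ i * esymm μ (j - i) := by
  rw [sigmaInfApproxPoly, coeff_mul, Finset.Nat.sum_antidiagonal_eq_sum_range_succ_mk]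
  simp only [coeff_one_add_C_mul_X_pow, Finset.prod_one_add_C_mul_X_coeff, esymm]

theorem tendsto_coeff_sigmaInfApproxPoly {n : ℕ} (μ₀ : ℝ) (μ : Fin n → ℝ) (j : ℕ) :
    Tendsto (fun N => (sigmaInfApproxPoly μ₀ μ N).coeff j) atTop (𝓝 (sigmaInf μ₀ μ j)) := by
  simp only [coeff_sigmaInfApproxPoly, sigmaInf]
  exact tendsto_finsetSum _ fun i _ => (tendsto_choose_mul_div_pow μ₀ i).mul_const _

/-- The weighted Newton inequality:
`σ_{k-1}^∞(μ₀;μ) σ_{k+1}^∞(μ₀;μ) ≤ (k/(k+1)) (σ_k^∞(μ₀;μ))²` for all `k ≥ 1`. -/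
theorem weighted_newton_inequality {n : ℕ} (k : ℕ) (hk : 1 ≤ k) (μ₀ : ℝ) (μ : Fin n → ℝ) :
    sigmaInf μ₀ μ (k - 1) * sigmaInf μ₀ μ (k + 1)
      ≤ (k : ℝ) / ((k : ℝ) + 1) * (sigmaInf μ₀ μ k) ^ 2 := by
  obtain ⟨k, rfl⟩ := Nat.exists_eq_add_of_le' hk
  have hlim := tendsto_coeff_sigmaInfApproxPoly μ₀ μ
  have hnewton : (k + 2 : ℝ) * (sigmaInf μ₀ μ k * sigmaInf μ₀ μ (k + 2))
      ≤ (k + 1) * sigmaInf μ₀ μ (k + 1) ^ 2 :=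
    le_of_tendsto_of_tendsto' (((hlim k).mul (hlim (k + 2))).const_mul _)
      (((hlim (k + 1)).pow 2).const_mul _)
      fun N => (splits_sigmaInfApproxPoly μ₀ μ N).coeff_mul_le_sq k
  rw [Nat.add_sub_cancel, div_mul_eq_mul_div, le_div_iff₀ (by positivity)]
  push_cast
  linarith
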